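/- A finite topological space X is T0 if and only if the rows of its furtherness matrix are pairwise distinct; that is, X is T0 iff for all x ≠ y there exists z with Ψ(x,z) ≠ Ψ(y,z). -/

import Mathlib

open Set Topology

/-- The minimal open set containing `x`: the intersection of all open sets containing `x`. -/
def minOpen (X : Type*) [TopologicalSpace X] (x : X) : Set X :=
  ⋂₀ {U : Set X | IsOpen U ∧ x ∈ U}

/-- A nested sequence of open sets around `x`: a sequence of open sets starting at the
minimal open set of `x`, increasing, strictly increasing until it reaches the whole space
(after which it is stationary), with no open set strictly between consecutive terms. -/
def NestedSeq (X : Type*) [TopologicalSpace X] (x : X) (c : ℕ → Set X) : Prop :=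
  c 0 = minOpen X x ∧ (∀ j, IsOpen (c j)) ∧
  (∀ j, c j ⊆ c (j + 1)) ∧
  (∀ j, c j ≠ c (j + 1) ∨ c j = Set.univ) ∧
  (∀ j, ∀ V : Set X, IsOpen V → c j ⊆ V → V ⊆ c (j + 1) → V = c j ∨ V = c (j + 1))

/-- The furtherness `Ψ(x,y)`: the least `k` such that `y` belongs to the `k`-th term of
some nested sequence of open sets around `x`. -/
noncomputable def furth (X : Type*) [TopologicalSpace X] (x y : X) : ℕ :=
  sInf {k | ∃ c : ℕ → Set X, NestedSeq X x c ∧ y ∈ c k}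

section Aux
variable {X : Type*} [TopologicalSpace X] [Finite X]

lemma minOpen_isOpen (x : X) : IsOpen (minOpen X x) :=
  Set.Finite.isOpen_sInter (Set.toFinite _) (fun _ h => h.1)

lemma mem_minOpen (x : X) : x ∈ minOpen X x := fun _ h => h.2

lemma minOpen_subset {x : X} {U : Set X} (hU : IsOpen U) (hx : x ∈ U) :
    minOpen X x ⊆ U := Set.sInter_subset_of_mem ⟨hU, hx⟩

lemma exists_min (U : Set X) (hne : U ≠ Set.univ) :
    ∃ V, (IsOpen V ∧ U ⊂ V) ∧ ∀ W, (IsOpen W ∧ U ⊂ W) → W ⊆ V → V = W := by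
  obtain ⟨V, hV, hmin⟩ := Set.Finite.exists_minimal (s := {W | IsOpen W ∧ U ⊂ W})
    (Set.toFinite _) ⟨Set.univ, isOpen_univ, hne.lt_top⟩
  exact ⟨V, hV, fun W hW hWV => le_antisymm (hmin hW hWV) hWV⟩

open Classical in
/-- Successor: a minimal open strict superset. -/
noncomputable def stepSet (U : Set X) : Set X :=
  if h : U ≠ Set.univ then Classical.choose (exists_min U h) else Set.univ

lemma stepSet_spec {U : Set X} (h : U ≠ Set.univ) :
    (IsOpen (stepSet U) ∧ U ⊂ stepSet U) ∧
    ∀ W, (IsOpen W ∧ U ⊂ W) → W ⊆ stepSet U → stepSet U = W := by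
  rw [stepSet, dif_pos h]; exact Classical.choose_spec (exists_min U h)

lemma stepSet_univ : stepSet (Set.univ : Set X) = Set.univ := by
  rw [stepSet, dif_neg]; simp

lemma stepSet_isOpen (U : Set X) : IsOpen (stepSet U) := by
  by_cases h : U = Set.univ
  · rw [h, stepSet_univ]; exact isOpen_univ
  · exact (stepSet_spec h).1.1

lemma nestedSeq_exists (x : X) : ∃ c : ℕ → Set X, NestedSeq X x c := by
  refine ⟨fun n => stepSet^[n] (minOpen X x), ?_, ?_, ?_, ?_, ?_⟩
  · rfl
  · intro j
    induction j with
    | zero => exact minOpen_isOpen x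
    | succ n ih =>
      show IsOpen (stepSet^[n+1] (minOpen X x))
      rw [Function.iterate_succ_apply']; exact stepSet_isOpen _
  · intro j
    show stepSet^[j] (minOpen X x) ⊆ stepSet^[j+1] (minOpen X x)
    rw [Function.iterate_succ_apply']
    by_cases h : stepSet^[j] (minOpen X x) = Set.univ
    · rw [h, stepSet_univ]
    · exact (stepSet_spec h).1.2.subset
  · intro j
    by_cases h : stepSet^[j] (minOpen X x) = Set.univ
    · exact Or.inr h
    · left
      show stepSet^[j] (minOpen X x) ≠ stepSet^[j+1] (minOpen X x)
      rw [Function.iterate_succ_apply']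
      exact (stepSet_spec h).1.2.ne
  · intro j V hV h1 h2
    show V = stepSet^[j] (minOpen X x) ∨ V = stepSet^[j+1] (minOpen X x)
    have h2' : V ⊆ stepSet^[j+1] (minOpen X x) := h2
    rw [Function.iterate_succ_apply'] at h2' ⊢
    replace h2 := h2'
    by_cases h : stepSet^[j] (minOpen X x) = Set.univ
    · left
      have h1' : stepSet^[j] (minOpen X x) ⊆ V := h1
      rw [h] at h1' ⊢
      exact Set.eq_univ_of_univ_subset h1'
    · by_cases hVe : V = stepSet^[j] (minOpen X x)
      · exact Or.inl hVe
      · right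
        exact ((stepSet_spec h).2 V ⟨hV, Ne.lt_of_le (Ne.symm hVe) h1⟩ h2).symm

lemma nestedSeq_reaches_univ {x : X} {c : ℕ → Set X} (hc : NestedSeq X x c) :
    ∃ k, c k = Set.univ := by
  by_contra h
  push_neg at h
  have hmono : StrictMono c := by
    apply strictMono_nat_of_lt_succ
    intro n
    exact lt_of_le_of_ne (hc.2.2.1 n) ((hc.2.2.2.1 n).resolve_right (h n))
  obtain ⟨a, b, hne, hab⟩ := Finite.exists_ne_map_eq_of_infinite c
  exact hne (hmono.injective hab)

lemma furth_eq_zero_iff (x y : X) : furth X x y = 0 ↔ y ∈ minOpen X x := by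
  constructor
  · intro h
    have hne : {k | ∃ c : ℕ → Set X, NestedSeq X x c ∧ y ∈ c k}.Nonempty := by
      obtain ⟨c, hc⟩ := nestedSeq_exists x
      obtain ⟨k, hk⟩ := nestedSeq_reaches_univ hc
      exact ⟨k, c, hc, hk ▸ Set.mem_univ y⟩
    have := Nat.sInf_mem hne
    rw [furth] at h
    rw [h] at this
    obtain ⟨c, hc, hy⟩ := this
    rwa [hc.1] at hy
  · intro h
    obtain ⟨c, hc⟩ := nestedSeq_exists x
    exact Nat.sInf_eq_zero.mpr (Or.inl ⟨c, hc, hc.1 ▸ h⟩)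

lemma furth_congr {x y : X} (h : minOpen X x = minOpen X y) (z : X) :
    furth X x z = furth X y z := by
  have : ∀ c, NestedSeq X x c ↔ NestedSeq X y c := by
    intro c; unfold NestedSeq; rw [h]
  unfold furth
  congr 1
  ext k
  simp only [Set.mem_setOf_eq, this]

end Aux

theorem stmt16 (X : Type*) [TopologicalSpace X] [Finite X] :
    T0Space X ↔ ∀ x y : X, x ≠ y → ∃ z : X, furth X x z ≠ furth X y z := by
  constructor
  · intro hT0 x y hxy
    have hsep : ¬Inseparable x y := fun h => hxy h.eq
    rw [inseparable_iff_forall_isOpen] at hsep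
    push_neg at hsep
    obtain ⟨U, hU, hiff⟩ := hsep
    rcases hiff with ⟨hxU, hyU⟩ | ⟨hxnU, hyU⟩
    · refine ⟨y, ?_⟩
      have h1 : furth X y y = 0 := (furth_eq_zero_iff y y).mpr (mem_minOpen y)
      have h2 : furth X x y ≠ 0 := by
        intro h
        exact hyU (minOpen_subset hU hxU ((furth_eq_zero_iff x y).mp h))
      rw [h1]; exact h2
    · refine ⟨x, ?_⟩
      have h1 : furth X x x = 0 := (furth_eq_zero_iff x x).mpr (mem_minOpen x)
      have h2 : furth X y x ≠ 0 := by
        intro h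
        exact hxnU (minOpen_subset hU hyU ((furth_eq_zero_iff y x).mp h))
      rw [h1]; exact Ne.symm h2
  · intro h
    refine t0Space_iff_inseparable X |>.mpr fun x y hins => ?_
    by_contra hxy
    obtain ⟨z, hz⟩ := h x y hxy
    apply hz
    apply furth_congr
    have := inseparable_iff_forall_isOpen.mp hins
    have hset : {U : Set X | IsOpen U ∧ x ∈ U} = {U : Set X | IsOpen U ∧ y ∈ U} := by
      ext U
      exact and_congr_right fun hU => by rw [this U hU]
    rw [minOpen, minOpen, hset]
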